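/- Let n ≥ 4 and let λ₁ = λ₂ > |λ₃| > 0 be real numbers (the three-dimensional symmetric top case). Then a matrix K in SO(n−1) satisfies ∃ Q ∈ SO(3) with Q Λ Kᵀ = Λ if and only if K is block diagonal of the form K = diag(S, det S, B), where S is a 2 × 2 real orthogonal matrix occupying the upper-left 2 × 2 block, the (3,3) entry equals det S, and B ∈ SO(n−4) occupies the lower-right (n−4) × (n−4) block (all off-diagonal blocks zero). -/

import Mathlib

/-
Split the columns of `Λ` as `3 + (n - 4)`, so that `Λ = [D | 0]` with `D = diag(λ₁, λ₁, λ₃)`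
invertible, and write `K` in block form `[[A, B], [C, E]]`. For orthogonal `K` the condition
`Q Λ Kᵀ = Λ` reads `Q Λ = Λ K`, i.e. `Q D = D A` and `D B = 0`. Hence `B = 0`, then orthogonality
of `K` forces `C = 0` and `A Aᵀ = 1`, so `Q D² Qᵀ = D A Aᵀ D = D²`: `Q` commutes with `D²`.
Since `λ₁² ≠ λ₃²`, `Q` commutes with `D` itself, whence `A = D⁻¹ Q D = Q`. Finally, commuting with
`diag(λ₁, λ₁, λ₃)` for `λ₁ ≠ λ₃` means `Q = diag(S, t)`, and `det Q = 1` forces `t = det S`.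
-/

/-- The `3 × (n-1)` matrix `Λ` with `Λ₁₁ = λ₁`, `Λ₂₂ = λ₂`, `Λ₃₃ = λ₃` and all other
entries zero. -/
def Lam (n : ℕ) (l1 l2 l3 : ℝ) : Matrix (Fin 3) (Fin (n - 1)) ℝ :=
  Matrix.of fun i j => if (j : ℕ) = (i : ℕ) then ![l1, l2, l3] i else 0

/-- The `n × n` block diagonal matrix `diag(A, B)` built from an `a × a` block `A` and a
`b × b` block `B`, where `a + b = n`. -/
def embedBlocks {a b n : ℕ} (h : a + b = n) (A : Matrix (Fin a) (Fin a) ℝ)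
    (B : Matrix (Fin b) (Fin b) ℝ) : Matrix (Fin n) (Fin n) ℝ :=
  Matrix.reindex (finSumFinEquiv.trans (finCongr h)) (finSumFinEquiv.trans (finCongr h))
    (Matrix.fromBlocks A 0 0 B)

open Matrix

namespace Matrix

theorem mul_reindex_mul_transpose_reindex {ι κ μ R : Type*} [Fintype ι] [Fintype κ]
    [Fintype μ] [Semiring R] (e : κ ≃ μ) (Q : Matrix ι ι R) (L : Matrix ι κ R) (K : Matrix κ κ R) :
    Q * reindex (Equiv.refl ι) e L * (reindex e e K)ᵀ =
      reindex (Equiv.refl ι) e (Q * L * Kᵀ) := by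
  simp only [reindex_apply, Equiv.refl_symm, Equiv.coe_refl, transpose_submatrix]
  rw [submatrix_mul _ _ id e.symm e.symm e.symm.bijective,
    submatrix_mul Q L id id _ Function.bijective_id, submatrix_id_id]

variable {ι γ R : Type*} [Fintype ι] [DecidableEq ι] [Fintype γ] [DecidableEq γ]

theorem commute_diagonal_iff [CommRing R] [NoZeroDivisors R] {d : ι → R} {Q : Matrix ι ι R} :
    Commute (diagonal d) Q ↔ ∀ i j, d i ≠ d j → Q i j = 0 := by
  constructor
  · intro h i j hij
    have hQij := congrFun₂ h.eq i j
    rw [diagonal_mul, mul_diagonal] at hQij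
    have : (d i - d j) * Q i j = 0 := by linear_combination hQij
    exact (mul_eq_zero.mp this).resolve_left (sub_ne_zero.mpr hij)
  · intro h
    ext i j
    rw [diagonal_mul, mul_diagonal]
    by_cases hij : d i = d j
    · rw [hij, mul_comm]
    · simp [h i j hij]

theorem commute_diagonal_of_commute_diagonal_sq [CommRing R] [NoZeroDivisors R] {d : ι → R}
    {Q : Matrix ι ι R} (hd : ∀ i j, d i ^ 2 = d j ^ 2 → d i = d j)
    (h : Commute (diagonal d ^ 2) Q) : Commute (diagonal d) Q := by
  rw [diagonal_pow, commute_diagonal_iff] at h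
  exact commute_diagonal_iff.2 fun i j hij => h i j (mt (hd i j) hij)

theorem commute_diagonal_sumElim_iff {α β : Type*} [Fintype α] [DecidableEq α] [Fintype β]
    [DecidableEq β] [CommRing R] [NoZeroDivisors R] {a c : R} (hac : a ≠ c)
    {Q : Matrix (α ⊕ β) (α ⊕ β) R} :
    Commute (diagonal (Sum.elim (fun _ => a) (fun _ => c))) Q ↔
      ∃ A B, Q = fromBlocks A 0 0 B := by
  rw [commute_diagonal_iff]
  constructor
  · intro h
    refine ⟨Q.toBlocks₁₁, Q.toBlocks₂₂, ?_⟩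
    conv_lhs => rw [← fromBlocks_toBlocks Q]
    congr <;> ext i j
    exacts [h _ _ hac, h _ _ hac.symm]
  · rintro ⟨A, B, rfl⟩ (i | i) (j | j) hij <;> simp_all

theorem fromBlocks_transpose_mul_self_eq_one_iff [Semiring R] {A : Matrix ι ι R}
    {B : Matrix γ γ R} :
    (fromBlocks A 0 0 B)ᵀ * fromBlocks A 0 0 B = 1 ↔ Aᵀ * A = 1 ∧ Bᵀ * B = 1 := by
  rw [fromBlocks_transpose, fromBlocks_multiply, ← fromBlocks_one, fromBlocks_inj]
  simp

theorem reindex_transpose_mul_self_eq_one_iff {κ : Type*} [Fintype κ] [DecidableEq κ]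
    [CommSemiring R] (e : ι ≃ κ) {M : Matrix ι ι R} :
    (reindex e e M)ᵀ * reindex e e M = 1 ↔ Mᵀ * M = 1 := by
  rw [transpose_reindex, ← coe_reindexAlgEquiv R R e, ← map_mul,
    ← map_one (reindexAlgEquiv R R e), EquivLike.apply_eq_iff_eq]

theorem det_sq_eq_one_of_transpose_mul_self_eq_one [CommRing R] {M : Matrix ι ι R}
    (hM : Mᵀ * M = 1) : M.det ^ 2 = 1 := by
  simpa [det_mul, det_transpose, sq] using congrArg det hM

theorem fromBlocks_fin_one_specialOrthogonal_iff {S : Matrix ι ι ℝ}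
    {T : Matrix (Fin 1) (Fin 1) ℝ} :
    ((fromBlocks S 0 0 T)ᵀ * fromBlocks S 0 0 T = 1 ∧ (fromBlocks S 0 0 T).det = 1) ↔
      Sᵀ * S = 1 ∧ T = of fun _ _ => S.det := by
  rw [fromBlocks_transpose_mul_self_eq_one_iff, det_fromBlocks_zero₂₁, det_fin_one]
  constructor
  · rintro ⟨⟨hS, hT⟩, hdet⟩
    have hT00 : T 0 0 ^ 2 = 1 := by simpa [mul_apply, sq] using congrFun₂ hT 0 0
    refine ⟨hS, ext fun i j => ?_⟩
    fin_cases i; fin_cases j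
    show T 0 0 = S.det
    linear_combination S.det * hT00 - T 0 0 * hdet
  · rintro ⟨hS, rfl⟩
    have hdetS := det_sq_eq_one_of_transpose_mul_self_eq_one hS
    refine ⟨⟨hS, ext fun i j => ?_⟩, by simpa [sq] using hdetS⟩
    fin_cases i; fin_cases j
    simpa [mul_apply, sq] using hdetS

theorem eq_zero_and_mul_transpose_eq_one_of_fromBlocks_zero₁₂ {A : Matrix ι ι ℝ}
    {C : Matrix γ ι ℝ} {E : Matrix γ γ ℝ}
    (hK : (fromBlocks A 0 C E)ᵀ * fromBlocks A 0 C E = 1) : C = 0 ∧ A * Aᵀ = 1 := by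
  have hKKt := mul_eq_one_comm.mp hK
  rw [fromBlocks_transpose, fromBlocks_multiply, ← fromBlocks_one, fromBlocks_inj] at hK hKKt
  simp only [transpose_zero, Matrix.zero_mul, Matrix.mul_zero, add_zero, zero_add] at hK hKKt
  refine ⟨?_, hKKt.1⟩
  rw [← conjTranspose_mul_self_eq_zero, conjTranspose_eq_transpose_of_trivial]
  simpa [mul_eq_one_comm.mp hKKt.1] using hK.1

theorem mul_fromCols_diagonal_mul_transpose_eq_iff {d : ι → ℝ} (hd0 : ∀ i, d i ≠ 0)
    (hd : ∀ i j, d i ^ 2 = d j ^ 2 → d i = d j) {Q : Matrix ι ι ℝ} (hQ : Qᵀ * Q = 1)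
    {K : Matrix (ι ⊕ γ) (ι ⊕ γ) ℝ} (hK : Kᵀ * K = 1) :
    Q * fromCols (diagonal d) (0 : Matrix ι γ ℝ) * Kᵀ = fromCols (diagonal d) 0 ↔
      Commute (diagonal d) Q ∧ ∃ B, K = fromBlocks Q 0 0 B := by
  have hD : IsUnit (diagonal d).det := by
    simpa [det_diagonal, Finset.prod_ne_zero_iff] using hd0
  constructor
  · intro h
    have hQΛ : Q * fromCols (diagonal d) (0 : Matrix ι γ ℝ) =
        fromCols (diagonal d) (0 : Matrix ι γ ℝ) * K := by
      conv_rhs => rw [← h]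
      rw [Matrix.mul_assoc, hK, Matrix.mul_one]
    obtain ⟨A, B, C, E, rfl⟩ : ∃ A B C E, K = fromBlocks A B C E :=
      ⟨_, _, _, _, (fromBlocks_toBlocks K).symm⟩
    rw [mul_fromCols, fromCols_mul_fromBlocks] at hQΛ
    simp only [Matrix.mul_zero, Matrix.zero_mul, add_zero] at hQΛ
    obtain ⟨hQA, hB⟩ := fromCols_inj hQΛ
    obtain rfl : B = 0 := by
      rw [← nonsing_inv_mul_cancel_left _ B hD, ← hB, Matrix.mul_zero]
    obtain ⟨rfl, hAAt⟩ := eq_zero_and_mul_transpose_eq_one_of_fromBlocks_zero₁₂ hK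
    have hsq : Q * diagonal d ^ 2 * Qᵀ = diagonal d ^ 2 := by
      calc Q * diagonal d ^ 2 * Qᵀ = (Q * diagonal d) * (Q * diagonal d)ᵀ := by
            rw [transpose_mul, diagonal_transpose, sq]; simp only [Matrix.mul_assoc]
        _ = diagonal d * (A * Aᵀ) * diagonal d := by
            rw [hQA, transpose_mul, diagonal_transpose]; simp only [Matrix.mul_assoc]
        _ = diagonal d ^ 2 := by rw [hAAt, Matrix.mul_one, sq]
    have hcomm : Commute (diagonal d) Q := by
      refine commute_diagonal_of_commute_diagonal_sq hd ?_
      calc diagonal d ^ 2 * Q = Q * diagonal d ^ 2 * Qᵀ * Q := by rw [hsq]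
        _ = Q * diagonal d ^ 2 := by rw [Matrix.mul_assoc, hQ, Matrix.mul_one]
    refine ⟨hcomm, E, ?_⟩
    rw [← nonsing_inv_mul_cancel_left _ A hD, ← hQA, ← hcomm.eq,
      nonsing_inv_mul_cancel_left _ Q hD]
  · rintro ⟨hcomm, B, rfl⟩
    rw [fromBlocks_transpose, mul_fromCols, fromCols_mul_fromBlocks, ← hcomm.eq, Matrix.mul_assoc,
      mul_eq_one_comm.mp hQ]
    simp

end Matrix

theorem specialOrthogonal_three_commute_diagonal_iff {a c : ℝ} (hac : a ≠ c)
    {Q : Matrix (Fin 3) (Fin 3) ℝ} :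
    ((Qᵀ * Q = 1 ∧ Q.det = 1) ∧ Commute (diagonal ![a, a, c]) Q) ↔
      ∃ S : Matrix (Fin 2) (Fin 2) ℝ, Sᵀ * S = 1 ∧
        Q = embedBlocks (by norm_num : 2 + 1 = 3) S (of fun _ _ => S.det) := by
  set e : Fin 2 ⊕ Fin 1 ≃ Fin 3 := finSumFinEquiv.trans (finCongr (by norm_num))
  have hd : diagonal ![a, a, c] =
      reindex e e (diagonal (Sum.elim (fun _ => a) (fun _ => c))) := by
    rw [reindex_apply, submatrix_diagonal_equiv]
    congr
    ext i
    fin_cases i <;> rfl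
  obtain ⟨Q, rfl⟩ := (reindex e e).surjective Q
  rw [hd, ← coe_reindexAlgEquiv ℝ ℝ e, commute_map_iff (reindexAlgEquiv ℝ ℝ e).injective,
    commute_diagonal_sumElim_iff hac, coe_reindexAlgEquiv, reindex_transpose_mul_self_eq_one_iff,
    det_reindex_self]
  constructor
  · rintro ⟨hQ, S, T, rfl⟩
    obtain ⟨hS, rfl⟩ := fromBlocks_fin_one_specialOrthogonal_iff.1 hQ
    exact ⟨S, hS, rfl⟩
  · rintro ⟨S, hS, hQ⟩
    obtain rfl := (reindex e e).injective hQ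
    exact ⟨fromBlocks_fin_one_specialOrthogonal_iff.2 ⟨hS, rfl⟩, _, _, rfl⟩

theorem eq_of_sq_eq_sq_vecCons_three {a c : ℝ} (hac : a ^ 2 ≠ c ^ 2) (i j : Fin 3)
    (h : ![a, a, c] i ^ 2 = ![a, a, c] j ^ 2) : ![a, a, c] i = ![a, a, c] j := by
  fin_cases i <;> fin_cases j <;> simp_all [eq_comm]

theorem Lam_eq_reindex {n : ℕ} (h : 3 + (n - 4) = n - 1) (l1 l2 l3 : ℝ) :
    Lam n l1 l2 l3 = reindex (Equiv.refl _) (finSumFinEquiv.trans (finCongr h))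
      (fromCols (diagonal ![l1, l2, l3]) (0 : Matrix (Fin 3) (Fin (n - 4)) ℝ)) := by
  ext i j
  obtain ⟨k | k, rfl⟩ := (finSumFinEquiv.trans (finCongr h)).surjective j
  · simp [Lam, diagonal_apply, Fin.ext_iff, eq_comm]
  · simp [Lam, show 3 + (k : ℕ) ≠ i by omega]

/-- Three-dimensional symmetric top case: for `n ≥ 4` and `λ₁ = λ₂ > |λ₃| > 0`, a matrix
`K ∈ SO(n-1)` satisfies `∃ Q ∈ SO(3), Q Λ Kᵀ = Λ` iff `K = diag(S, det S, B)` with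
`S ∈ O(2)` and `B ∈ SO(n-4)`. -/
theorem stmt_6 (n : ℕ) (hn : 4 ≤ n) (l1 l2 l3 : ℝ)
    (h12 : l1 = l2) (h23 : |l3| < l2) (h3 : 0 < |l3|)
    (K : Matrix (Fin (n - 1)) (Fin (n - 1)) ℝ)
    (hK : K.transpose * K = 1 ∧ K.det = 1) :
    (∃ Q : Matrix (Fin 3) (Fin 3) ℝ,
        (Q.transpose * Q = 1 ∧ Q.det = 1) ∧
        Q * Lam n l1 l2 l3 * K.transpose = Lam n l1 l2 l3) ↔
      ∃ (S : Matrix (Fin 2) (Fin 2) ℝ) (B : Matrix (Fin (n - 4)) (Fin (n - 4)) ℝ),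
        S.transpose * S = 1 ∧
        (B.transpose * B = 1 ∧ B.det = 1) ∧
        K = embedBlocks (by omega : 3 + (n - 4) = n - 1)
              (embedBlocks (by norm_num : 2 + 1 = 3) S
                (Matrix.of fun _ _ => S.det : Matrix (Fin 1) (Fin 1) ℝ)) B := by
  subst h12
  have hl1 : 0 < l1 := (abs_nonneg l3).trans_lt h23
  have hne : l1 ≠ l3 := ((le_abs_self l3).trans_lt h23).ne'
  have hsq : l1 ^ 2 ≠ l3 ^ 2 := by
    simpa only [sq_abs] using (pow_lt_pow_left₀ h23 (abs_nonneg l3) two_ne_zero).ne'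
  have hd0 : ∀ i : Fin 3, ![l1, l1, l3] i ≠ 0 := by
    intro i; fin_cases i <;> simp [hl1.ne', abs_pos.mp h3]
  have hsplit : 3 + (n - 4) = n - 1 := by omega
  rw [Lam_eq_reindex hsplit]
  set e := finSumFinEquiv.trans (finCongr hsplit)
  obtain ⟨K, rfl⟩ := (reindex e e).surjective K
  rw [reindex_transpose_mul_self_eq_one_iff, det_reindex_self] at hK
  have hemb : ∀ X B, embedBlocks hsplit X B = reindex e e (fromBlocks X 0 0 B) := fun _ _ => rfl
  simp only [mul_reindex_mul_transpose_reindex, hemb, EquivLike.apply_eq_iff_eq]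
  have key Q (hQ : Qᵀ * Q = 1) :=
    mul_fromCols_diagonal_mul_transpose_eq_iff hd0 (eq_of_sq_eq_sq_vecCons_three hsq) hQ hK.1
  constructor
  · rintro ⟨Q, hQ, hQK⟩
    obtain ⟨hcomm, B, rfl⟩ := (key Q hQ.1).1 hQK
    obtain ⟨S, hS, rfl⟩ := (specialOrthogonal_three_commute_diagonal_iff hne).1 ⟨hQ, hcomm⟩
    refine ⟨S, B, hS, ⟨(fromBlocks_transpose_mul_self_eq_one_iff.1 hK.1).2, ?_⟩, rfl⟩
    simpa [det_fromBlocks_zero₂₁, hQ.2] using hK.2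
  · rintro ⟨S, B, hS, -, rfl⟩
    obtain ⟨hQ, hcomm⟩ := (specialOrthogonal_three_commute_diagonal_iff hne).2 ⟨S, hS, rfl⟩
    exact ⟨_, hQ, (key _ hQ.1).2 ⟨hcomm, B, rfl⟩⟩
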